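/- arXiv:0708.3044 — 2 statements merged into one kernel-verified Lean document; each statement's English description precedes it below -/
import Mathlib

section
/- Let H = p₁² + p₂² + p₃² + V with V(x,y,z) = α(x²+y²+z²) + β/x² + γ/y² + δ/z², and let J₁₂ = (x p₂ − y p₁)² + β y²/x² + γ x²/y². Then {H, J₁₂} = 0 wherever xyz ≠ 0. -/
/-!
Write `L = x p₂ − y p₁` and `W = β y²/x² + γ x²/y²`, so that `J₁₂ = L² + W`. The kinetic energy
and the isotropic part `α (x² + y² + z²)` of the potential both commute with `L`, which generates
rotations in the `(x, y)`-plane, and `J₁₂` involves neither `z` nor `p₃`. What is left are the two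
cross terms `{β/x² + γ/y², L²}` and `{p₁² + p₂², W}`, which are `± 4 L (β y/x³ − γ x/y³)` and cancel.
-/

open Complex

/-- Canonical Poisson bracket on phase space ℂ³ × ℂ³ with coordinates `(x, y, z, p, q, r)`,
the momenta `p, q, r` being `p₁, p₂, p₃`, for functions given in curried form. -/
noncomputable def poissonBracket (F G : ℂ → ℂ → ℂ → ℂ → ℂ → ℂ → ℂ)
    (x y z p q r : ℂ) : ℂ :=
  (deriv (fun t => F t y z p q r) x) * (deriv (fun t => G x y z t q r) p)
    - (deriv (fun t => F x y z t q r) p) * (deriv (fun t => G t y z p q r) x)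
    + (deriv (fun t => F x t z p q r) y) * (deriv (fun t => G x y z p t r) q)
    - (deriv (fun t => F x y z p t r) q) * (deriv (fun t => G x t z p q r) y)
    + (deriv (fun t => F x y t p q r) z) * (deriv (fun t => G x y z p q t) r)
    - (deriv (fun t => F x y z p q t) r) * (deriv (fun t => G x y t p q r) z)

noncomputable def VI (α β γ δ : ℂ) (x y z : ℂ) : ℂ :=
  α * (x ^ 2 + y ^ 2 + z ^ 2) + β / x ^ 2 + γ / y ^ 2 + δ / z ^ 2

section NormalForm

variable {f : ℂ → ℂ} {x : ℂ}

theorem hasDerivAt_sq_add_mul_sq (u v a : ℂ) :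
    HasDerivAt (fun t => (u * t + v) ^ 2 + a * t ^ 2) (2 * u * (u * x + v) + 2 * a * x) x := by
  have hlin := ((hasDerivAt_id x).const_mul u).add_const v
  refine ((hlin.pow 2).add ((hasDerivAt_pow 2 x).const_mul a)).congr_deriv ?_
  norm_num
  ring

theorem hasDerivAt_div_sq (b : ℂ) (hx : x ≠ 0) :
    HasDerivAt (fun t => b / t ^ 2) (-(2 * b / x ^ 3)) x := by
  refine ((hasDerivAt_const x b).div (hasDerivAt_pow 2 x) (pow_ne_zero 2 hx)).congr_deriv ?_
  field_simp
  ring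

theorem deriv_eq_of_eq_sq_add_mul_sq (u v a c : ℂ)
    (hf : ∀ t, f t = (u * t + v) ^ 2 + a * t ^ 2 + c) :
    deriv f x = 2 * u * (u * x + v) + 2 * a * x := by
  rw [funext hf]
  exact ((hasDerivAt_sq_add_mul_sq u v a).add_const c).deriv

theorem deriv_eq_of_eq_sq_add_mul_sq_add_div_sq (u v a b c : ℂ) (hx : x ≠ 0)
    (hf : ∀ t, f t = (u * t + v) ^ 2 + a * t ^ 2 + b / t ^ 2 + c) :
    deriv f x = 2 * u * (u * x + v) + 2 * a * x - 2 * b / x ^ 3 := by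
  rw [funext hf, sub_eq_add_neg]
  exact (((hasDerivAt_sq_add_mul_sq u v a).add (hasDerivAt_div_sq b hx)).add_const c).deriv

end NormalForm

noncomputable def hamiltonianI (α β γ δ : ℂ) (x y z p q r : ℂ) : ℂ :=
  p ^ 2 + q ^ 2 + r ^ 2 + VI α β γ δ x y z

noncomputable def integralJ12 (β γ : ℂ) (x y _z p q _r : ℂ) : ℂ :=
  (x * q - y * p) ^ 2 + β * y ^ 2 / x ^ 2 + γ * x ^ 2 / y ^ 2

section PartialDerivatives

variable {α β γ δ x y z p q r : ℂ}

theorem deriv_hamiltonianI_x (hx : x ≠ 0) :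
    deriv (fun t => hamiltonianI α β γ δ t y z p q r) x = 2 * α * x - 2 * β / x ^ 3 := by
  rw [deriv_eq_of_eq_sq_add_mul_sq_add_div_sq 0 0 α β
    (p ^ 2 + q ^ 2 + r ^ 2 + α * (y ^ 2 + z ^ 2) + γ / y ^ 2 + δ / z ^ 2) hx
    fun t => by simp only [hamiltonianI, VI]; ring]
  ring

theorem deriv_hamiltonianI_y (hy : y ≠ 0) :
    deriv (fun t => hamiltonianI α β γ δ x t z p q r) y = 2 * α * y - 2 * γ / y ^ 3 := by
  rw [deriv_eq_of_eq_sq_add_mul_sq_add_div_sq 0 0 α γ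
    (p ^ 2 + q ^ 2 + r ^ 2 + α * (x ^ 2 + z ^ 2) + β / x ^ 2 + δ / z ^ 2) hy
    fun t => by simp only [hamiltonianI, VI]; ring]
  ring

theorem deriv_hamiltonianI_p :
    deriv (fun t => hamiltonianI α β γ δ x y z t q r) p = 2 * p := by
  rw [deriv_eq_of_eq_sq_add_mul_sq 0 0 1 (q ^ 2 + r ^ 2 + VI α β γ δ x y z)
    fun t => by simp only [hamiltonianI]; ring]
  ring

theorem deriv_hamiltonianI_q :
    deriv (fun t => hamiltonianI α β γ δ x y z p t r) q = 2 * q := by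
  rw [deriv_eq_of_eq_sq_add_mul_sq 0 0 1 (p ^ 2 + r ^ 2 + VI α β γ δ x y z)
    fun t => by simp only [hamiltonianI]; ring]
  ring

theorem deriv_integralJ12_x (hx : x ≠ 0) :
    deriv (fun t => integralJ12 β γ t y z p q r) x
      = 2 * q * (x * q - y * p) + 2 * γ * x / y ^ 2 - 2 * β * y ^ 2 / x ^ 3 := by
  rw [deriv_eq_of_eq_sq_add_mul_sq_add_div_sq q (-(y * p)) (γ / y ^ 2) (β * y ^ 2) 0 hx
    fun t => by simp only [integralJ12]; ring]
  ring

theorem deriv_integralJ12_y (hy : y ≠ 0) :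
    deriv (fun t => integralJ12 β γ x t z p q r) y
      = -2 * p * (x * q - y * p) + 2 * β * y / x ^ 2 - 2 * γ * x ^ 2 / y ^ 3 := by
  rw [deriv_eq_of_eq_sq_add_mul_sq_add_div_sq (-p) (x * q) (β / x ^ 2) (γ * x ^ 2) 0 hy
    fun t => by simp only [integralJ12]; ring]
  ring

theorem deriv_integralJ12_p :
    deriv (fun t => integralJ12 β γ x y z t q r) p = -2 * y * (x * q - y * p) := by
  rw [deriv_eq_of_eq_sq_add_mul_sq (-y) (x * q) 0 (β * y ^ 2 / x ^ 2 + γ * x ^ 2 / y ^ 2)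
    fun t => by simp only [integralJ12]; ring]
  ring

theorem deriv_integralJ12_q :
    deriv (fun t => integralJ12 β γ x y z p t r) q = 2 * x * (x * q - y * p) := by
  rw [deriv_eq_of_eq_sq_add_mul_sq x (-(y * p)) 0 (β * y ^ 2 / x ^ 2 + γ * x ^ 2 / y ^ 2)
    fun t => by simp only [integralJ12]; ring]
  ring

theorem deriv_integralJ12_z : deriv (fun t => integralJ12 β γ x y t p q r) z = 0 :=
  deriv_const _ _

theorem deriv_integralJ12_r : deriv (fun t => integralJ12 β γ x y z p q t) r = 0 :=
  deriv_const _ _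

end PartialDerivatives

/-- The Hamiltonian with the system I potential Poisson-commutes with
`J₁₂ = (x p₂ − y p₁)² + β y²/x² + γ x²/y²` wherever `xyz ≠ 0`. -/
theorem stmt1 (α β γ δ : ℂ) :
    ∀ x y z p q r : ℂ, x * y * z ≠ 0 →
      poissonBracket
        (fun x y z p q r => p ^ 2 + q ^ 2 + r ^ 2 + VI α β γ δ x y z)
        (fun x y _ p q _ =>
          (x * q - y * p) ^ 2 + β * y ^ 2 / x ^ 2 + γ * x ^ 2 / y ^ 2)
        x y z p q r = 0 := by
  intro x y z p q r hxyz
  have hxy : x * y ≠ 0 := left_ne_zero_of_mul hxyz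
  have hx : x ≠ 0 := left_ne_zero_of_mul hxy
  have hy : y ≠ 0 := right_ne_zero_of_mul hxy
  change poissonBracket (hamiltonianI α β γ δ) (integralJ12 β γ) x y z p q r = 0
  rw [poissonBracket, deriv_hamiltonianI_x hx, deriv_hamiltonianI_y hy, deriv_hamiltonianI_p,
    deriv_hamiltonianI_q, deriv_integralJ12_x hx, deriv_integralJ12_y hy, deriv_integralJ12_p,
    deriv_integralJ12_q, deriv_integralJ12_z, deriv_integralJ12_r]
  field_simp
  ring
end

section
/- For V(x,y,z) = α(x²+y²+z²) + β(x−iy)/(x+iy)³ + γ/(x+iy)² + δ/z² (system II), the function J₃² V-part consistency holds: V satisfies the hyperbolic-coordinate integrability condition (1 + ixy)(V_{yy} − V_{xx}) + i(x² − y² − 2)V_{xy} + 3i(xV_y − yV_x) = 0 on the open set where x + iy ≠ 0 and z ≠ 0. -/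
/-!
Along each coordinate line every term of `V` is a quotient `f / w ^ n` with `w = x + iy`, so all
partial derivatives are explicit rational functions of `w` and `x - iy`. With
`K = 6γ / w⁴ + 12β (x - iy) / w⁵` one finds `V_yy - V_xx = -2K` and `V_xy = iK`, so the
second-order part of the operator is `(-2(1 + ixy) - (x² - y² - 2)) K = -w² K`, while the
first-order part is `3i (x V_y - y V_x) = w² K`.
-/

open Complex

noncomputable def pd1 (f : ℂ → ℂ → ℂ → ℂ) (x y z : ℂ) : ℂ :=
  deriv (fun t => f t y z) x

noncomputable def pd2 (f : ℂ → ℂ → ℂ → ℂ) (x y z : ℂ) : ℂ :=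
  deriv (fun t => f x t z) y

noncomputable def pd3 (f : ℂ → ℂ → ℂ → ℂ) (x y z : ℂ) : ℂ :=
  deriv (fun t => f x y t) z

/-- The system II potential. -/
noncomputable def VII2 (α β γ δ : ℂ) (x y z : ℂ) : ℂ :=
  α * (x ^ 2 + y ^ 2 + z ^ 2) + β * (x - I * y) / (x + I * y) ^ 3
    + γ / (x + I * y) ^ 2 + δ / z ^ 2

open Filter Topology

theorem HasDerivAt.div_pow {𝕜 : Type*} [NontriviallyNormedField 𝕜] {f g : 𝕜 → 𝕜} {f' g' t : 𝕜}
    (hf : HasDerivAt f f' t) (hg : HasDerivAt g g' t) (hg0 : g t ≠ 0) (n : ℕ) :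
    HasDerivAt (fun s => f s / g s ^ n) (f' / g t ^ n - n * f t * g' / g t ^ (n + 1)) t := by
  refine (hf.div (hg.pow n) (pow_ne_zero n hg0)).congr_deriv ?_
  rcases n with _ | n
  · simp
  · simp only [Pi.pow_apply, Nat.add_sub_cancel]
    field_simp
    ring

theorem pd1_pd1_eq_of_hasDerivAt {f : ℂ → ℂ → ℂ → ℂ} {g : ℂ → ℂ} {g' x y z : ℂ}
    (hf : ∀ᶠ t in 𝓝 x, HasDerivAt (fun u => f u y z) (g t) t) (hg : HasDerivAt g g' x) :
    pd1 (pd1 f) x y z = g' := by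
  have h : (fun t => pd1 f t y z) =ᶠ[𝓝 x] g := hf.mono fun t ht => ht.deriv
  rw [pd1, h.deriv_eq, hg.deriv]

theorem pd2_pd2_eq_of_hasDerivAt {f : ℂ → ℂ → ℂ → ℂ} {g : ℂ → ℂ} {g' x y z : ℂ}
    (hf : ∀ᶠ s in 𝓝 y, HasDerivAt (fun u => f x u z) (g s) s) (hg : HasDerivAt g g' y) :
    pd2 (pd2 f) x y z = g' := by
  have h : (fun s => pd2 f x s z) =ᶠ[𝓝 y] g := hf.mono fun s hs => hs.deriv
  rw [pd2, h.deriv_eq, hg.deriv]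

theorem pd1_pd2_eq_of_hasDerivAt {f : ℂ → ℂ → ℂ → ℂ} {g : ℂ → ℂ} {g' x y z : ℂ}
    (hf : ∀ᶠ t in 𝓝 x, HasDerivAt (fun u => f t u z) (g t) y) (hg : HasDerivAt g g' x) :
    pd1 (pd2 f) x y z = g' := by
  have h : (fun t => pd2 f t y z) =ᶠ[𝓝 x] g := hf.mono fun t ht => ht.deriv
  rw [pd1, h.deriv_eq, hg.deriv]

section VII2
variable (α β γ δ : ℂ) {x y : ℂ}

theorem hasDerivAt_VII2_fst (z : ℂ) (hw : x + I * y ≠ 0) :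
    HasDerivAt (fun t => VII2 α β γ δ t y z)
      (2 * α * x + (β - 2 * γ) / (x + I * y) ^ 3 - 3 * β * (x - I * y) / (x + I * y) ^ 4) x := by
  have hw' : HasDerivAt (fun t => t + I * y) 1 x := (hasDerivAt_id x).add_const _
  have hv' : HasDerivAt (fun t => β * (t - I * y)) β x := by
    simpa using ((hasDerivAt_id x).sub_const (I * y)).const_mul β
  have hr := (((hasDerivAt_pow 2 x).add_const (y ^ 2)).add_const (z ^ 2)).const_mul α
  refine (((hr.add (hv'.div_pow hw' hw 3)).add
    ((hasDerivAt_const x γ).div_pow hw' hw 2)).add_const (δ / z ^ 2)).congr_deriv ?_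
  field_simp
  ring

theorem hasDerivAt_VII2_snd (z : ℂ) (hw : x + I * y ≠ 0) :
    HasDerivAt (fun s => VII2 α β γ δ x s z)
      (2 * α * y - I * (β + 2 * γ) / (x + I * y) ^ 3
        - 3 * I * β * (x - I * y) / (x + I * y) ^ 4) y := by
  have hw' : HasDerivAt (fun s => x + I * s) I y := by
    simpa using ((hasDerivAt_id y).const_mul I).const_add x
  have hv' : HasDerivAt (fun s => β * (x - I * s)) (-I * β) y := by
    simpa [mul_comm] using (((hasDerivAt_id y).const_mul I).const_sub x).const_mul β
  have hr := (((hasDerivAt_pow 2 y).const_add (x ^ 2)).add_const (z ^ 2)).const_mul α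
  refine (((hr.add (hv'.div_pow hw' hw 3)).add
    ((hasDerivAt_const y γ).div_pow hw' hw 2)).add_const (δ / z ^ 2)).congr_deriv ?_
  field_simp
  ring

theorem pd1_pd1_VII2 (z : ℂ) (hw : x + I * y ≠ 0) :
    pd1 (pd1 (VII2 α β γ δ)) x y z
      = 2 * α - 6 * (β - γ) / (x + I * y) ^ 4 + 12 * β * (x - I * y) / (x + I * y) ^ 5 := by
  have hnear : ∀ᶠ t in 𝓝 x, t + I * y ≠ 0 :=
    (continuous_id.add continuous_const).continuousAt.eventually_ne hw
  refine pd1_pd1_eq_of_hasDerivAt (hnear.mono fun t ht => hasDerivAt_VII2_fst α β γ δ z ht) ?_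
  have hw' : HasDerivAt (fun t => t + I * y) 1 x := (hasDerivAt_id x).add_const _
  have hv' : HasDerivAt (fun t => 3 * β * (t - I * y)) (3 * β) x := by
    simpa using ((hasDerivAt_id x).sub_const (I * y)).const_mul (3 * β)
  refine ((((hasDerivAt_id x).const_mul (2 * α)).add
    ((hasDerivAt_const x (β - 2 * γ)).div_pow hw' hw 3)).sub
    (hv'.div_pow hw' hw 4)).congr_deriv ?_
  field_simp
  ring

theorem pd2_pd2_VII2 (z : ℂ) (hw : x + I * y ≠ 0) :
    pd2 (pd2 (VII2 α β γ δ)) x y z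
      = 2 * α - 6 * (β + γ) / (x + I * y) ^ 4 - 12 * β * (x - I * y) / (x + I * y) ^ 5 := by
  have hnear : ∀ᶠ s in 𝓝 y, x + I * s ≠ 0 :=
    (continuous_const.add (continuous_const.mul continuous_id)).continuousAt.eventually_ne hw
  refine pd2_pd2_eq_of_hasDerivAt (hnear.mono fun s hs => hasDerivAt_VII2_snd α β γ δ z hs) ?_
  have hw' : HasDerivAt (fun s => x + I * s) I y := by
    simpa using ((hasDerivAt_id y).const_mul I).const_add x
  have hv' : HasDerivAt (fun s => 3 * I * β * (x - I * s)) (3 * β) y := by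
    refine ((((hasDerivAt_id y).const_mul I).const_sub x).const_mul (3 * I * β)).congr_deriv ?_
    linear_combination (-3 * β) * I_sq
  refine ((((hasDerivAt_id y).const_mul (2 * α)).sub
    ((hasDerivAt_const y (I * (β + 2 * γ))).div_pow hw' hw 3)).sub
    (hv'.div_pow hw' hw 4)).congr_deriv ?_
  field_simp
  grind [I_sq]

theorem pd1_pd2_VII2 (z : ℂ) (hw : x + I * y ≠ 0) :
    pd1 (pd2 (VII2 α β γ δ)) x y z
      = I * (6 * γ / (x + I * y) ^ 4 + 12 * β * (x - I * y) / (x + I * y) ^ 5) := by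
  have hnear : ∀ᶠ t in 𝓝 x, t + I * y ≠ 0 :=
    (continuous_id.add continuous_const).continuousAt.eventually_ne hw
  refine pd1_pd2_eq_of_hasDerivAt (hnear.mono fun t ht => hasDerivAt_VII2_snd α β γ δ z ht) ?_
  have hw' : HasDerivAt (fun t => t + I * y) 1 x := (hasDerivAt_id x).add_const _
  have hv' : HasDerivAt (fun t => 3 * I * β * (t - I * y)) (3 * I * β) x := by
    simpa using ((hasDerivAt_id x).sub_const (I * y)).const_mul (3 * I * β)
  refine (((hasDerivAt_const x (2 * α * y)).sub
    ((hasDerivAt_const x (I * (β + 2 * γ))).div_pow hw' hw 3)).sub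
    (hv'.div_pow hw' hw 4)).congr_deriv ?_
  field_simp
  ring

theorem angular_deriv_VII2 (z : ℂ) (hw : x + I * y ≠ 0) :
    3 * I * (x * pd2 (VII2 α β γ δ) x y z - y * pd1 (VII2 α β γ δ) x y z)
      = (x + I * y) ^ 2 * (6 * γ / (x + I * y) ^ 4 + 12 * β * (x - I * y) / (x + I * y) ^ 5) := by
  rw [pd1, pd2, (hasDerivAt_VII2_fst α β γ δ z hw).deriv,
    (hasDerivAt_VII2_snd α β γ δ z hw).deriv]
  field_simp
  grind [I_sq]

end VII2

/-- The system II potential satisfies the hyperbolic-coordinate integrability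
condition `(1 + ixy)(V_{yy} − V_{xx}) + i(x² − y² − 2)V_{xy}
+ 3i(xV_y − yV_x) = 0` wherever `x + iy ≠ 0` and `z ≠ 0`. -/
theorem stmt12 (α β γ δ : ℂ) :
    ∀ x y z : ℂ, x + I * y ≠ 0 → z ≠ 0 →
      (1 + I * x * y) * (pd2 (pd2 (VII2 α β γ δ)) x y z
          - pd1 (pd1 (VII2 α β γ δ)) x y z)
        + I * (x ^ 2 - y ^ 2 - 2) * pd1 (pd2 (VII2 α β γ δ)) x y z
        + 3 * I * (x * pd2 (VII2 α β γ δ) x y z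
            - y * pd1 (VII2 α β γ δ) x y z) = 0 := by
  intro x y z hw _
  set K := 6 * γ / (x + I * y) ^ 4 + 12 * β * (x - I * y) / (x + I * y) ^ 5
  have hsecond : pd2 (pd2 (VII2 α β γ δ)) x y z - pd1 (pd1 (VII2 α β γ δ)) x y z = -2 * K := by
    rw [pd2_pd2_VII2 α β γ δ z hw, pd1_pd1_VII2 α β γ δ z hw]
    ring
  have hmixed : pd1 (pd2 (VII2 α β γ δ)) x y z = I * K := pd1_pd2_VII2 α β γ δ z hw
  have hangular : 3 * I * (x * pd2 (VII2 α β γ δ) x y z - y * pd1 (VII2 α β γ δ) x y z)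
      = (x + I * y) ^ 2 * K := angular_deriv_VII2 α β γ δ z hw
  linear_combination (1 + I * x * y) * hsecond + I * (x ^ 2 - y ^ 2 - 2) * hmixed + hangular
    + K * (x ^ 2 - 2) * I_sq
end
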